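/- Let A₁ be the quotient of the free noncommutative ℤ/2-algebra on five generators a₁, a₂, a₃, a₄, a₅ by the two-sided ideal generated by the five elements a₄a₂, a₁a₄ + a₅a₃, a₂a₅, 1 + a₂a₁, and 1 + a₃a₂. Then in A₁ the images of a₄ and a₅ are zero and the images of a₁ and a₃ are equal, and A₁ is isomorphic as a ℤ/2-algebra to C₁, the quotient of the free noncommutative ℤ/2-algebra on two generators a₁, a₂ by the two-sided ideal generated by a₁a₂ − 1 and a₂a₁ − 1. -/

import Mathlib

noncomputable section

/-- The quotient of a ℤ/2-algebra by a ring congruence is again a ℤ/2-algebra,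
via the quotient map. -/
noncomputable instance ringConQuotientAlgebra
    {R : Type*} [Ring R] [Algebra (ZMod 2) R] (c : RingCon R) :
    Algebra (ZMod 2) c.Quotient :=
  RingHom.toAlgebra' ((RingCon.mk' c).comp (algebraMap (ZMod 2) R)) (by
    intro r x
    change (RingCon.mk' c) (algebraMap (ZMod 2) R r) * x = x * (RingCon.mk' c) (algebraMap (ZMod 2) R r)
    obtain rfl | rfl : r = 0 ∨ r = 1 := by revert r; decide
    all_goals simp)

/-- The generators `a₁, …, a₅` of the free ℤ/2-algebra on five letters. -/
def a (i : Fin 5) : FreeAlgebra (ZMod 2) (Fin 5) := FreeAlgebra.ι (ZMod 2) i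

/-- The relations `a₄a₂`, `a₁a₄ + a₅a₃`, `a₂a₅`, `1 + a₂a₁`, `1 + a₃a₂` for the
characteristic algebra of the knot `L₁`. -/
def relA1 : Set (FreeAlgebra (ZMod 2) (Fin 5)) :=
  {a 3 * a 1, a 0 * a 3 + a 4 * a 2, a 1 * a 4, 1 + a 1 * a 0, 1 + a 2 * a 1}

/-- The characteristic algebra `A₁` of the knot `L₁`. -/
def A1 := (TwoSidedIdeal.span relA1).ringCon.Quotient

instance : Ring A1 := inferInstanceAs (Ring (TwoSidedIdeal.span relA1).ringCon.Quotient)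
instance : Algebra (ZMod 2) A1 :=
  inferInstanceAs (Algebra (ZMod 2) (TwoSidedIdeal.span relA1).ringCon.Quotient)

/-- The quotient map onto `A₁`. -/
def q1 : FreeAlgebra (ZMod 2) (Fin 5) →+* A1 :=
  RingCon.mk' (TwoSidedIdeal.span relA1).ringCon

/-- The generators of the free ℤ/2-algebra on two letters. -/
def b (i : Fin 2) : FreeAlgebra (ZMod 2) (Fin 2) := FreeAlgebra.ι (ZMod 2) i

/-- The simplified characteristic algebra
`C₁ = ℤ₂⟨a₁, a₂⟩/(a₁a₂ − 1, a₂a₁ − 1)`. -/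
def C1 := (TwoSidedIdeal.span {b 0 * b 1 - 1, b 1 * b 0 - 1}).ringCon.Quotient

instance : Ring C1 :=
  inferInstanceAs (Ring (TwoSidedIdeal.span {b 0 * b 1 - 1, b 1 * b 0 - 1}).ringCon.Quotient)
instance : Algebra (ZMod 2) C1 :=
  inferInstanceAs
    (Algebra (ZMod 2) (TwoSidedIdeal.span {b 0 * b 1 - 1, b 1 * b 0 - 1}).ringCon.Quotient)


/-! The relations `a₂a₁ = 1 = a₃a₂` give `a₂` the right inverse `a₁` and the left inverse `a₃`,
so `a₁ = a₃` is a two-sided inverse of `a₂`. Cancelling `a₂` on the right in `a₄a₂ = 0` gives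
`a₄ = 0`; then `a₁a₄ + a₅a₃ = 0` becomes `a₅a₃ = 0`, and cancelling `a₃` gives `a₅ = 0`. Hence
`a₁, a₂, a₃, a₄, a₅ ↦ a₁, a₂, a₁, 0, 0` and `a₁, a₂ ↦ a₁, a₂` are mutually inverse maps between
the presentations (in characteristic 2, `1 + x = 0` says `x = 1`). Here `a i` stands for the
paper's `aᵢ₊₁`. -/

section Presentation

variable {R S : Type*} [Ring R] [Ring S] {s : Set R}

theorem TwoSidedIdeal.mk'_span_eq_zero {r : R} (hr : r ∈ s) : (span s).ringCon.mk' r = 0 :=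
  (RingCon.eq _).mpr ((mem_iff _ _).mp (subset_span hr))

def TwoSidedIdeal.liftSpan (f : R →+* S) (hf : ∀ r ∈ s, f r = 0) :
    (span s).ringCon.Quotient →+* S :=
  (span s).ringCon.lift f <| ringCon_le_iff.mp <| span_le.mpr fun r hr => (mem_ker f).mpr (hf r hr)

end Presentation

theorem FreeAlgebra.ringHom_ext_zmod {n : ℕ} {X S : Type*} [Ring S]
    {f g : FreeAlgebra (ZMod n) X →+* S} (h : ∀ x, f (ι (ZMod n) x) = g (ι (ZMod n) x)) :
    f = g := by
  ext y
  induction y using FreeAlgebra.induction with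
  | grade0 r =>
    exact RingHom.congr_fun (RingHom.ext_zmod (f.comp (algebraMap _ _)) (g.comp (algebraMap _ _))) r
  | grade1 x => exact h x
  | mul x y hx hy => rw [map_mul, map_mul, hx, hy]
  | add x y hx hy => rw [map_add, map_add, hx, hy]

def RingEquiv.toZModAlgEquiv {n : ℕ} {A B : Type*} [Ring A] [Ring B] [Algebra (ZMod n) A]
    [Algebra (ZMod n) B] (e : A ≃+* B) : A ≃ₐ[ZMod n] B :=
  AlgEquiv.ofRingEquiv fun r =>
    RingHom.congr_fun (RingHom.ext_zmod ((e : A →+* B).comp (algebraMap _ _)) (algebraMap _ _)) r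

theorem one_add_eq_zero_iff_of_zmod_two {R : Type*} [Ring R] [Algebra (ZMod 2) R] {t : R} :
    1 + t = 0 ↔ t = 1 := by
  have two_eq_zero : (2 : R) = 0 := by
    rw [← map_ofNat (algebraMap (ZMod 2) R) 2]
    exact (congrArg _ (by decide : (2 : ZMod 2) = 0)).trans (map_zero _)
  have neg_one_eq_one : (-1 : R) = 1 := by
    rw [neg_eq_iff_add_eq_zero, one_add_one_eq_two, two_eq_zero]
  rw [add_eq_zero_iff_neg_eq, neg_one_eq_one, eq_comm]

lemma q1_eq_zero_of_mem (r : FreeAlgebra (ZMod 2) (Fin 5)) (hr : r ∈ relA1) : q1 r = 0 :=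
  TwoSidedIdeal.mk'_span_eq_zero hr

lemma q1_a3_mul_a1 : q1 (a 3) * q1 (a 1) = 0 := by
  simpa using q1_eq_zero_of_mem (a 3 * a 1) (by simp [relA1])

lemma q1_a0_mul_a3_add_a4_mul_a2 : q1 (a 0) * q1 (a 3) + q1 (a 4) * q1 (a 2) = 0 := by
  simpa using q1_eq_zero_of_mem (a 0 * a 3 + a 4 * a 2) (by simp [relA1])

lemma q1_a1_mul_a0 : q1 (a 1) * q1 (a 0) = 1 := by
  simpa [one_add_eq_zero_iff_of_zmod_two] using q1_eq_zero_of_mem (1 + a 1 * a 0) (by simp [relA1])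

lemma q1_a2_mul_a1 : q1 (a 2) * q1 (a 1) = 1 := by
  simpa [one_add_eq_zero_iff_of_zmod_two] using q1_eq_zero_of_mem (1 + a 2 * a 1) (by simp [relA1])

lemma q1_a3 : q1 (a 3) = 0 :=
  (isRightRegular_of_mul_eq_one q1_a1_mul_a0).mul_right_eq_zero_iff.mp q1_a3_mul_a1

lemma q1_a4 : q1 (a 4) = 0 := by
  have h : q1 (a 4) * q1 (a 2) = 0 := by
    simpa [q1_a3] using q1_a0_mul_a3_add_a4_mul_a2
  exact (isRightRegular_of_mul_eq_one q1_a2_mul_a1).mul_right_eq_zero_iff.mp h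

lemma q1_a0_eq_a2 : q1 (a 0) = q1 (a 2) :=
  (left_inv_eq_right_inv q1_a2_mul_a1 q1_a1_mul_a0).symm

lemma q1_a0_mul_a1 : q1 (a 0) * q1 (a 1) = 1 :=
  q1_a0_eq_a2 ▸ q1_a2_mul_a1

def qC1 : FreeAlgebra (ZMod 2) (Fin 2) →+* C1 :=
  RingCon.mk' (TwoSidedIdeal.span {b 0 * b 1 - 1, b 1 * b 0 - 1}).ringCon

lemma qC1_eq_zero_of_mem (r : FreeAlgebra (ZMod 2) (Fin 2))
    (hr : r ∈ ({b 0 * b 1 - 1, b 1 * b 0 - 1} : Set _)) : qC1 r = 0 :=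
  TwoSidedIdeal.mk'_span_eq_zero hr

lemma qC1_b0_mul_b1 : qC1 (b 0) * qC1 (b 1) = 1 := by
  simpa [sub_eq_zero] using qC1_eq_zero_of_mem (b 0 * b 1 - 1) (by simp)

lemma qC1_b1_mul_b0 : qC1 (b 1) * qC1 (b 0) = 1 := by
  simpa [sub_eq_zero] using qC1_eq_zero_of_mem (b 1 * b 0 - 1) (by simp)

def a1ToC1 : A1 →+* C1 :=
  TwoSidedIdeal.liftSpan
    (FreeAlgebra.lift (ZMod 2) ![qC1 (b 0), qC1 (b 1), qC1 (b 0), 0, 0]).toRingHom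
    (by
      simp only [relA1, Set.mem_insert_iff, Set.mem_singleton_iff]
      rintro r (rfl | rfl | rfl | rfl | rfl) <;>
        simp [a, one_add_eq_zero_iff_of_zmod_two, qC1_b0_mul_b1, qC1_b1_mul_b0])

def c1ToA1 : C1 →+* A1 :=
  TwoSidedIdeal.liftSpan (FreeAlgebra.lift (ZMod 2) ![q1 (a 0), q1 (a 1)]).toRingHom
    (by
      simp only [Set.mem_insert_iff, Set.mem_singleton_iff]
      rintro r (rfl | rfl) <;> simp [b, q1_a0_mul_a1, q1_a1_mul_a0])

@[simp]
lemma a1ToC1_q1_a (i : Fin 5) : a1ToC1 (q1 (a i)) = ![qC1 (b 0), qC1 (b 1), qC1 (b 0), 0, 0] i :=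
  FreeAlgebra.lift_ι_apply _ _

@[simp]
lemma c1ToA1_qC1_b (i : Fin 2) : c1ToA1 (qC1 (b i)) = ![q1 (a 0), q1 (a 1)] i :=
  FreeAlgebra.lift_ι_apply _ _

lemma c1ToA1_comp_a1ToC1 : c1ToA1.comp a1ToC1 = RingHom.id A1 := by
  refine RingCon.Quotient.hom_ext (FreeAlgebra.ringHom_ext_zmod fun i => ?_)
  change c1ToA1 (a1ToC1 (q1 (a i))) = q1 (a i)
  fin_cases i <;> simp [q1_a0_eq_a2, q1_a3, q1_a4]

lemma a1ToC1_comp_c1ToA1 : a1ToC1.comp c1ToA1 = RingHom.id C1 := by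
  refine RingCon.Quotient.hom_ext (FreeAlgebra.ringHom_ext_zmod fun i => ?_)
  change a1ToC1 (c1ToA1 (qC1 (b i))) = qC1 (b i)
  fin_cases i <;> simp

/-- In `A₁` the images of `a₄` and `a₅` vanish, the images of `a₁` and `a₃`
agree, and `A₁` is isomorphic as a ℤ/2-algebra to
`C₁ = ℤ₂⟨a₁, a₂⟩/(1 = a₁a₂ = a₂a₁)`. -/
theorem charAlgebraL1_simplification :
    q1 (a 3) = 0 ∧ q1 (a 4) = 0 ∧ q1 (a 0) = q1 (a 2) ∧
      Nonempty (A1 ≃ₐ[ZMod 2] C1) :=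
  ⟨q1_a3, q1_a4, q1_a0_eq_a2, ⟨(RingEquiv.ofRingHom a1ToC1 c1ToA1 a1ToC1_comp_c1ToA1
    c1ToA1_comp_a1ToC1).toZModAlgEquiv⟩⟩

end
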